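/- Let c_1,...,c_m ≥ 0 with c_{m+i} = c_i, and let h be a symmetric real 2m×2m matrix with ī = m+i. Then ∑_{i,j=1}^{2m} c_i h_{ij}^2 + 2 ∑_{i,j=1}^{m} c_i (h_{i j̄} h_{ī j} - h_{ij} h_{ī j̄}) ≥ 0, with equality when all c_i > 0 if and only if h_{ij} = h_{ī j̄} and h_{i j̄} = -h_{ī j} for all 1 ≤ i, j ≤ m (i.e., h is Hermitian with respect to the complex structure J e_i = e_{ī}). -/

import Mathlib

/-!
Splitting the indices into `i` and `ī = m + i` and using `c ī = c i`, the left-hand side is the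
sum over `i, j < m` of `c i` times the squared norm of the `(i, j)` block of the `J`-anti-invariant
part of `h`, namely `(h i j - h ī j̄)² + (h i j̄ + h ī j)²`. A sum of nonnegative terms with
positive weights vanishes iff every term does, which is exactly `J`-invariance of `h`.
-/

open Finset

def hermitianDefect (m : ℕ) (h : ℕ → ℕ → ℝ) (i j : ℕ) : ℝ :=
  (h i j - h (m + i) (m + j)) ^ 2 + (h i (m + j) + h (m + i) j) ^ 2

lemma hermitianDefect_nonneg (m : ℕ) (h : ℕ → ℕ → ℝ) (i j : ℕ) :
    0 ≤ hermitianDefect m h i j := by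
  unfold hermitianDefect
  positivity

lemma hermitianDefect_eq_zero_iff (m : ℕ) (h : ℕ → ℕ → ℝ) (i j : ℕ) :
    hermitianDefect m h i j = 0 ↔ h i j = h (m + i) (m + j) ∧ h i (m + j) = -h (m + i) j := by
  rw [hermitianDefect, add_eq_zero_iff_of_nonneg (sq_nonneg _) (sq_nonneg _),
    sq_eq_zero_iff, sq_eq_zero_iff, sub_eq_zero, add_eq_zero_iff_eq_neg]

lemma Finset.sum_range_two_mul {M : Type*} [AddCommMonoid M] (m : ℕ) (f : ℕ → M) :
    ∑ i ∈ range (2 * m), f i = ∑ i ∈ range m, (f i + f (m + i)) := by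
  rw [two_mul, sum_range_add, sum_add_distrib]

lemma sum_sq_add_two_mul_cross_eq_sum_hermitianDefect (m : ℕ) (c : ℕ → ℝ) (h : ℕ → ℕ → ℝ)
    (hext : ∀ i < m, c (m + i) = c i) :
    ∑ i ∈ range (2 * m), ∑ j ∈ range (2 * m), c i * (h i j) ^ 2
        + 2 * ∑ i ∈ range m, ∑ j ∈ range m,
            c i * (h i (m + j) * h (m + i) j - h i j * h (m + i) (m + j))
      = ∑ i ∈ range m, c i * ∑ j ∈ range m, hermitianDefect m h i j := by
  simp_rw [sum_range_two_mul, mul_sum, ← sum_add_distrib]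
  refine sum_congr rfl fun i hi => sum_congr rfl fun j _ => ?_
  rw [hext i (mem_range.mp hi), hermitianDefect]
  ring

lemma Finset.sum_mul_eq_zero_iff_of_pos {ι : Type*} {s : Finset ι} {c f : ι → ℝ}
    (hc : ∀ i ∈ s, 0 < c i) (hf : ∀ i ∈ s, 0 ≤ f i) :
    ∑ i ∈ s, c i * f i = 0 ↔ ∀ i ∈ s, f i = 0 := by
  rw [sum_eq_zero_iff_of_nonneg fun i hi => mul_nonneg (hc i hi).le (hf i hi)]
  exact forall₂_congr fun i hi => mul_eq_zero_iff_left (hc i hi).ne'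

theorem kahler_nonneg_ricci_algebraic_inequality_general
    (m : ℕ) (c : ℕ → ℝ) (h : ℕ → ℕ → ℝ)
    (hext : ∀ i < m, c (m + i) = c i)
    (hc : ∀ i < m, 0 ≤ c i) :
    (0 ≤ ∑ i ∈ range (2 * m), ∑ j ∈ range (2 * m), c i * (h i j) ^ 2
        + 2 * ∑ i ∈ range m, ∑ j ∈ range m,
            c i * (h i (m + j) * h (m + i) j - h i j * h (m + i) (m + j)))
      ∧ ((∀ i < m, 0 < c i) →
          ((∑ i ∈ range (2 * m), ∑ j ∈ range (2 * m), c i * (h i j) ^ 2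
              + 2 * ∑ i ∈ range m, ∑ j ∈ range m,
                  c i * (h i (m + j) * h (m + i) j - h i j * h (m + i) (m + j)) = 0)
            ↔ (∀ i < m, ∀ j < m,
                h i j = h (m + i) (m + j) ∧ h i (m + j) = - h (m + i) j))) := by
  rw [sum_sq_add_two_mul_cross_eq_sum_hermitianDefect m c h hext]
  have hrow : ∀ i ∈ range m, 0 ≤ ∑ j ∈ range m, hermitianDefect m h i j :=
    fun i _ => sum_nonneg fun j _ => hermitianDefect_nonneg m h i j
  refine ⟨sum_nonneg fun i hi => mul_nonneg (hc i (mem_range.mp hi)) (hrow i hi), fun hpos => ?_⟩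
  rw [sum_mul_eq_zero_iff_of_pos (fun i hi => hpos i (mem_range.mp hi)) hrow]
  simp only [sum_eq_zero_iff_of_nonneg fun j _ => hermitianDefect_nonneg m h _ j,
    hermitianDefect_eq_zero_iff, mem_range]

/-- Let `c 0, …, c (m-1) ≥ 0` with `c (m+i) = c i`, and let `h` be a
symmetric real `2m × 2m` matrix with `ī = m+i`.  Then
`∑_{i,j<2m} c i h i j ^ 2 + 2 ∑_{i,j<m} c i (h i (m+j) * h (m+i) j - h i j * h (m+i) (m+j)) ≥ 0`,
and if all `c i > 0`, equality holds iff `h i j = h (m+i) (m+j)` and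
`h i (m+j) = - h (m+i) j` for all `i, j < m` (i.e. `h` is Hermitian with respect to the
complex structure `J e_i = e_{ī}`). -/
theorem kahler_nonneg_ricci_algebraic_inequality
    (m : ℕ) (c : ℕ → ℝ) (h : ℕ → ℕ → ℝ)
    (hsym : ∀ i j, h i j = h j i)
    (hext : ∀ i < m, c (m + i) = c i)
    (hc : ∀ i < m, 0 ≤ c i) :
    (0 ≤ ∑ i ∈ range (2 * m), ∑ j ∈ range (2 * m), c i * (h i j) ^ 2
        + 2 * ∑ i ∈ range m, ∑ j ∈ range m,
            c i * (h i (m + j) * h (m + i) j - h i j * h (m + i) (m + j)))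
      ∧ ((∀ i < m, 0 < c i) →
          ((∑ i ∈ range (2 * m), ∑ j ∈ range (2 * m), c i * (h i j) ^ 2
              + 2 * ∑ i ∈ range m, ∑ j ∈ range m,
                  c i * (h i (m + j) * h (m + i) j - h i j * h (m + i) (m + j)) = 0)
            ↔ (∀ i < m, ∀ j < m,
                h i j = h (m + i) (m + j) ∧ h i (m + j) = - h (m + i) j))) :=
  kahler_nonneg_ricci_algebraic_inequality_general m c h hext hc
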